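/- For a matrix polynomial P(λ) = Σ_{l=0}^d A_l λ^l with A_l ∈ ℂ^{n×n}, an approximate eigenpair (x̃, λ̃) with x̃ ≠ 0, and tolerance matrices E_l with Σ_l |λ̃|^l ‖E_l‖_2 > 0, the backward error η(x̃, λ̃) = min{ε : (P(λ̃) + ΔP(λ̃))x̃ = 0, ‖ΔA_l‖_2 ≤ ε‖E_l‖_2 for all l} equals ‖P(λ̃)x̃‖_2 / (α̃ ‖x̃‖_2), where α̃ = Σ_l |λ̃|^l ‖E_l‖_2. -/

import Mathlib

/-!
If `(P + ∑ i, w i • Δ i) x = 0` with `‖Δ i‖ ≤ ε e i`, then `P x = -(∑ i, w i • Δ i) x`, so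
`‖P x‖ ≤ ε (∑ i, ‖w i‖ e i) ‖x‖`. Conversely, Hahn–Banach gives a map `M` with `M x = -P x` and
`‖M‖ = ‖P x‖ / ‖x‖`; spreading `M` over the `Δ i` proportionally to `e i`, after rotating away
the phase of `w i`, attains this bound. Nothing depends on matrices: the matrix statement is the
case `w l = λ ^ l` on Euclidean space, where `opNorm` is the operator norm of `toEuclideanCLM`.
-/

noncomputable def opNorm {n : ℕ} (A : Matrix (Fin n) (Fin n) ℂ) : ℝ :=
  ‖(Matrix.toEuclideanCLM (𝕜 := ℂ) A : EuclideanSpace ℂ (Fin n) →L[ℂ] EuclideanSpace ℂ (Fin n))‖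

open ComplexConjugate

namespace RCLike

variable {𝕜 : Type*} [RCLike 𝕜]

theorem mul_conj_div_norm (w : 𝕜) : w * (conj w / ‖w‖) = ‖w‖ := by
  rcases eq_or_ne w 0 with rfl | hw
  · simp
  have hw' : (‖w‖ : 𝕜) ≠ 0 := ofReal_ne_zero.2 (norm_ne_zero_iff.2 hw)
  rw [← mul_div_assoc, mul_conj]
  field_simp

theorem norm_conj_div_norm_le_one (w : 𝕜) : ‖conj w / ‖w‖‖ ≤ 1 := by
  rw [norm_div, norm_conj, norm_ofReal, abs_norm]
  exact div_self_le_one _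

end RCLike

section BackwardError

variable {𝕜 E F ι : Type*} [RCLike 𝕜] [NormedAddCommGroup E] [NormedSpace 𝕜 E]
  [NormedAddCommGroup F] [NormedSpace 𝕜 F] [Fintype ι]

theorem ContinuousLinearMap.exists_apply_eq_norm_eq_div {x : E} (hx : x ≠ 0) (y : F) :
    ∃ M : E →L[𝕜] F, M x = y ∧ ‖M‖ = ‖y‖ / ‖x‖ := by
  obtain ⟨g, hg, hgx⟩ := exists_dual_vector 𝕜 x (norm_ne_zero_iff.2 hx)
  have hx' : (‖x‖ : 𝕜) ≠ 0 := RCLike.ofReal_ne_zero.2 (norm_ne_zero_iff.2 hx)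
  refine ⟨((‖x‖ : 𝕜)⁻¹ • g).smulRight y, ?_, ?_⟩
  · simp [hgx, hx']
  · rw [norm_smulRight_apply, norm_smul, hg, norm_inv, RCLike.norm_ofReal, abs_norm]
    ring

/-- For a matrix polynomial `∑ i, λ ^ i • A i`, the weights are `w i = λ ^ i`. -/
def backwardErrors (P : E →L[𝕜] F) (w : ι → 𝕜) (e : ι → ℝ) (x : E) : Set ℝ :=
  {ε | ∃ Δ : ι → E →L[𝕜] F, (P + ∑ i, w i • Δ i) x = 0 ∧ ∀ i, ‖Δ i‖ ≤ ε * e i}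

variable {P : E →L[𝕜] F} {w : ι → 𝕜} {e : ι → ℝ} {x : E} {ε : ℝ}

theorem norm_apply_le_of_mem_backwardErrors (hε : ε ∈ backwardErrors P w e x) :
    ‖P x‖ ≤ ε * ((∑ i, ‖w i‖ * e i) * ‖x‖) := by
  obtain ⟨Δ, hnull, hΔ⟩ := hε
  have hPx : P x = -(∑ i, w i • Δ i) x :=
    eq_neg_of_add_eq_zero_left (by rwa [← add_apply])
  calc ‖P x‖ = ‖(∑ i, w i • Δ i) x‖ := by rw [hPx, norm_neg]
    _ ≤ ‖∑ i, w i • Δ i‖ * ‖x‖ := (∑ i, w i • Δ i).le_opNorm x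
    _ ≤ (∑ i, ‖w i‖ * (ε * e i)) * ‖x‖ := by
      gcongr
      refine norm_sum_le_of_le _ fun i _ => ?_
      rw [norm_smul]
      gcongr
      exact hΔ i
    _ = ε * ((∑ i, ‖w i‖ * e i) * ‖x‖) := by
      rw [Finset.sum_mul, Finset.sum_mul, Finset.mul_sum]
      exact Finset.sum_congr rfl fun i _ => by ring

theorem div_mem_backwardErrors (he : ∀ i, 0 ≤ e i) (hα : 0 < ∑ i, ‖w i‖ * e i) (hx : x ≠ 0) :
    ‖P x‖ / ((∑ i, ‖w i‖ * e i) * ‖x‖) ∈ backwardErrors P w e x := by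
  set α := ∑ i, ‖w i‖ * e i
  obtain ⟨M, hMx, hM⟩ := ContinuousLinearMap.exists_apply_eq_norm_eq_div (𝕜 := 𝕜) hx (-P x)
  set c : ι → 𝕜 := fun i => conj (w i) / ‖w i‖
  refine ⟨fun i => (c i * (e i / α : ℝ)) • M, ?_, fun i => ?_⟩
  · have hweights : ∑ i, ‖w i‖ * (e i / α) = 1 := by
      simp_rw [← mul_div_assoc, ← Finset.sum_div]
      exact div_self hα.ne'
    have hsum : ∑ i, w i • (c i * (e i / α : ℝ)) • M = M := by
      simp_rw [c, smul_smul, ← mul_assoc, RCLike.mul_conj_div_norm, ← Finset.sum_smul]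
      rw [show ∑ i, (‖w i‖ : 𝕜) * ((e i / α : ℝ) : 𝕜) = 1 by exact_mod_cast hweights, one_smul]
    rw [hsum, add_apply, hMx, add_neg_cancel]
  · have hei : 0 ≤ e i / α := div_nonneg (he i) hα.le
    calc ‖(c i * (e i / α : ℝ)) • M‖ = ‖c i‖ * (e i / α) * (‖P x‖ / ‖x‖) := by
          rw [norm_smul, norm_mul, RCLike.norm_ofReal, abs_of_nonneg hei, hM, norm_neg]
      _ ≤ 1 * (e i / α) * (‖P x‖ / ‖x‖) := by
          gcongr
          exact RCLike.norm_conj_div_norm_le_one _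
      _ = ‖P x‖ / (α * ‖x‖) * e i := by ring

theorem sInf_backwardErrors (he : ∀ i, 0 ≤ e i) (hα : 0 < ∑ i, ‖w i‖ * e i) (hx : x ≠ 0) :
    sInf (backwardErrors P w e x) = ‖P x‖ / ((∑ i, ‖w i‖ * e i) * ‖x‖) :=
  IsLeast.csInf_eq ⟨div_mem_backwardErrors he hα hx, fun _ hε =>
    (div_le_iff₀ (by positivity)).2 (norm_apply_le_of_mem_backwardErrors hε)⟩

end BackwardError

theorem backward_error_formula_general (n d : ℕ)
    (E : Fin (d + 1) → Matrix (Fin n) (Fin n) ℂ)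
    (lam : ℂ) (x : EuclideanSpace ℂ (Fin n)) (hx : x ≠ 0)
    (alpha : ℝ) (halpha : alpha = ∑ l : Fin (d + 1), ‖lam‖ ^ (l : ℕ) * opNorm (E l))
    (halphapos : 0 < alpha)
    (Plam : Matrix (Fin n) (Fin n) ℂ) :
    sInf {ε : ℝ | ∃ ΔA : Fin (d + 1) → Matrix (Fin n) (Fin n) ℂ,
        Matrix.toEuclideanCLM (𝕜 := ℂ)
            (Plam + ∑ l : Fin (d + 1), lam ^ (l : ℕ) • ΔA l) x = 0 ∧
        ∀ l : Fin (d + 1), opNorm (ΔA l) ≤ ε * opNorm (E l)} =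
      ‖Matrix.toEuclideanCLM (𝕜 := ℂ) Plam x‖ / (alpha * ‖x‖) := by
  have hset : {ε : ℝ | ∃ ΔA : Fin (d + 1) → Matrix (Fin n) (Fin n) ℂ,
        Matrix.toEuclideanCLM (𝕜 := ℂ)
            (Plam + ∑ l : Fin (d + 1), lam ^ (l : ℕ) • ΔA l) x = 0 ∧
        ∀ l : Fin (d + 1), opNorm (ΔA l) ≤ ε * opNorm (E l)} =
      backwardErrors (Matrix.toEuclideanCLM (𝕜 := ℂ) Plam)
        (fun l : Fin (d + 1) => lam ^ (l : ℕ)) (fun l => opNorm (E l)) x :=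
    Set.ext fun ε =>
      ⟨fun ⟨ΔA, hnull, hΔ⟩ =>
        ⟨fun l => Matrix.toEuclideanCLM (𝕜 := ℂ) (ΔA l), by simpa using hnull, hΔ⟩,
      fun ⟨Δ, hnull, hΔ⟩ =>
        ⟨fun l => (Matrix.toEuclideanCLM (𝕜 := ℂ)).symm (Δ l), by simpa using hnull,
          by simpa [opNorm] using hΔ⟩⟩
  have hα : alpha = ∑ l : Fin (d + 1), ‖lam ^ (l : ℕ)‖ * opNorm (E l) := by
    simp only [halpha, norm_pow]
  rw [hset, hα]
  exact sInf_backwardErrors (fun _ => norm_nonneg _) (hα ▸ halphapos) hx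

/-- for `P(λ) = Σ_{l=0}^d A_l λ^l`, an approximate eigenpair `(x̃, λ̃)`
with `x̃ ≠ 0`, and tolerances `E_l` with `α̃ = Σ_l |λ̃|^l ‖E_l‖₂ > 0`, the backward
error `η(x̃, λ̃) = min { ε | (P(λ̃) + ΔP(λ̃)) x̃ = 0, ‖ΔA_l‖₂ ≤ ε ‖E_l‖₂ }` equals
`‖P(λ̃) x̃‖₂ / (α̃ ‖x̃‖₂)`. -/
theorem backward_error_formula (n d : ℕ)
    (A E : Fin (d + 1) → Matrix (Fin n) (Fin n) ℂ)
    (lam : ℂ) (x : EuclideanSpace ℂ (Fin n)) (hx : x ≠ 0)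
    (alpha : ℝ) (halpha : alpha = ∑ l : Fin (d + 1), ‖lam‖ ^ (l : ℕ) * opNorm (E l))
    (halphapos : 0 < alpha)
    (Plam : Matrix (Fin n) (Fin n) ℂ)
    (hPlam : Plam = ∑ l : Fin (d + 1), lam ^ (l : ℕ) • A l) :
    sInf {ε : ℝ | ∃ ΔA : Fin (d + 1) → Matrix (Fin n) (Fin n) ℂ,
        Matrix.toEuclideanCLM (𝕜 := ℂ)
            (Plam + ∑ l : Fin (d + 1), lam ^ (l : ℕ) • ΔA l) x = 0 ∧
        ∀ l : Fin (d + 1), opNorm (ΔA l) ≤ ε * opNorm (E l)} =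
      ‖Matrix.toEuclideanCLM (𝕜 := ℂ) Plam x‖ / (alpha * ‖x‖) :=
  backward_error_formula_general n d E lam x hx alpha halpha halphapos Plam
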